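/- arXiv:2507.15185 — 5 statements merged into one kernel-verified Lean document; each statement's English description precedes it below -/
import Mathlib

section
/- Let z_1, ..., z_m be the values |⟨x − x*, a_i⟩| for rows a_i of a matrix A with unit-norm rows, and let q' ∈ (0,1). The q'-quantile of {z_1, ..., z_m} (the ⌊q'm⌋-th smallest value) satisfies Q̃_{q'}(x) ≤ (σ_max(A)·√n / (√m·√(1−q'))) · ‖x − x*‖/√n. Equivalently, Q̃_{q'}(x) ≤ σ_max(A)·‖x − x*‖/(√m·√(1−q')). -/
open scoped RealInnerProductSpace

/-!
In the sorted list of residuals `zᵢ = |⟪x - x*, aᵢ⟫|`, every entry from the quantile's position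
onwards is at least the quantile `Q`, so at least `(1 - q') m` residuals are `≥ Q`. Chebyshev's
counting bound then gives `(1 - q') m Q² ≤ ∑ zᵢ² = ‖A (x - x*)‖² ≤ σ_max² ‖x - x*‖²`.
-/

/-- The `q`-quantile of a multiset of reals: its `⌊q⬝card⌋`-th smallest element
(1-indexed), where the index is taken to be `1` if `⌊q⬝card⌋ < 1`. -/
noncomputable def quantile (s : Multiset ℝ) (q : ℝ) : ℝ :=
  (s.sort (· ≤ ·)).getD (max (Nat.floor (q * s.card)) 1 - 1) 0

theorem List.Pairwise.length_sub_le_length_filter_getElem_le {α : Type*} [Preorder α]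
    [DecidableLE α] {l : List α} (hl : l.Pairwise (· ≤ ·)) {k : ℕ} (hk : k < l.length) :
    l.length - k ≤ (l.filter (l[k] ≤ ·)).length := by
  have hge : ∀ x ∈ l.drop k, l[k] ≤ x := by
    have hdrop : (l.drop k).Pairwise (· ≤ ·) := hl.sublist (List.drop_sublist k l)
    rw [List.drop_eq_getElem_cons hk, List.pairwise_cons] at hdrop
    rw [List.drop_eq_getElem_cons hk]
    exact List.forall_mem_cons.2 ⟨le_rfl, hdrop.1⟩
  have hfilter : (l.drop k).filter (l[k] ≤ ·) = l.drop k :=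
    List.filter_eq_self.2 (by simpa using hge)
  calc l.length - k = ((l.drop k).filter (l[k] ≤ ·)).length := by simp [hfilter]
    _ ≤ (l.filter (l[k] ≤ ·)).length := ((List.drop_sublist k l).filter _).length_le

theorem Multiset.card_filter_mul_sq_le_sum_sq {s : Multiset ℝ} {t : ℝ} (ht : 0 ≤ t) :
    (s.filter (t ≤ ·)).card * t ^ 2 ≤ (s.map (· ^ 2)).sum := by
  have hfilter : (s.filter (t ≤ ·)).card * t ^ 2 ≤ ((s.filter (t ≤ ·)).map (· ^ 2)).sum := by
    rw [← nsmul_eq_mul, ← Multiset.card_map (· ^ 2)]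
    refine Multiset.card_nsmul_le_sum fun y hy => ?_
    obtain ⟨x, hx, rfl⟩ := Multiset.mem_map.1 hy
    exact pow_le_pow_left₀ ht (Multiset.of_mem_filter hx) 2
  have hrest : 0 ≤ ((s.filter (¬t ≤ ·)).map (· ^ 2)).sum :=
    Multiset.sum_nonneg fun y hy => by
      obtain ⟨x, -, rfl⟩ := Multiset.mem_map.1 hy
      exact sq_nonneg x
  conv_rhs => rw [← Multiset.filter_add_not (t ≤ ·) s, Multiset.map_add, Multiset.sum_add]
  linarith

theorem quantile_nonneg {s : Multiset ℝ} (hs : ∀ x ∈ s, 0 ≤ x) (q : ℝ) : 0 ≤ quantile s q := by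
  set l := s.sort (· ≤ ·)
  set k := max ⌊q * s.card⌋₊ 1 - 1
  rcases lt_or_ge k l.length with hk | hk
  · rw [quantile, List.getD_eq_getElem _ _ hk]
    exact hs _ ((Multiset.mem_sort _).1 (List.getElem_mem hk))
  · rw [quantile, List.getD_eq_default _ _ hk]

theorem one_sub_mul_card_le_card_filter_quantile_le (s : Multiset ℝ) {q : ℝ} (hq : 0 ≤ q) :
    (1 - q) * s.card ≤ (s.filter (quantile s q ≤ ·)).card := by
  rcases le_or_gt 1 q with hq1 | hq1
  · have : (1 - q) * s.card ≤ 0 := mul_nonpos_of_nonpos_of_nonneg (by linarith) (by positivity)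
    exact this.trans (by positivity)
  set l := s.sort (· ≤ ·)
  set k := max ⌊q * s.card⌋₊ 1 - 1
  have hlen : l.length = s.card := Multiset.length_sort _
  have hk_floor : k ≤ ⌊q * s.card⌋₊ := by omega
  have hfloor_le : (⌊q * s.card⌋₊ : ℝ) ≤ q * s.card := Nat.floor_le (by positivity)
  rcases Nat.eq_zero_or_pos s.card with hs | hs
  · simp [hs]
  have hk : k < l.length := by
    have : ⌊q * s.card⌋₊ < s.card :=
      (Nat.floor_lt (by positivity)).2 (mul_lt_of_lt_one_left (by exact_mod_cast hs) hq1)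
    omega
  have hQ : quantile s q = l[k] := List.getD_eq_getElem _ _ hk
  have hfilter : s.filter (quantile s q ≤ ·) = (l.filter (l[k] ≤ ·) : List ℝ) := by
    rw [hQ, ← Multiset.filter_coe, Multiset.sort_eq]
  rw [hfilter, Multiset.coe_card]
  calc (1 - q) * s.card ≤ ((l.length - k : ℕ) : ℝ) := by
        rw [Nat.cast_sub hk.le, hlen]
        have : (k : ℝ) ≤ ⌊q * s.card⌋₊ := by exact_mod_cast hk_floor
        linarith
    _ ≤ (l.filter (l[k] ≤ ·)).length := by
        exact_mod_cast (Multiset.pairwise_sort s (· ≤ ·)).length_sub_le_length_filter_getElem_le hk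

theorem one_sub_mul_card_mul_quantile_sq_le_sum_sq {s : Multiset ℝ} (hs : ∀ x ∈ s, 0 ≤ x)
    {q : ℝ} (hq : 0 ≤ q) : (1 - q) * s.card * quantile s q ^ 2 ≤ (s.map (· ^ 2)).sum :=
  (mul_le_mul_of_nonneg_right (one_sub_mul_card_le_card_filter_quantile_le s hq)
    (sq_nonneg _)).trans (Multiset.card_filter_mul_sq_le_sum_sq (quantile_nonneg hs q))

theorem ideal_quantile_upper_bound_general (m n : ℕ) (hm : 0 < m) (hn : 0 < n)
    (a : Fin m → EuclideanSpace ℝ (Fin n))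
    (smax : ℝ)
    (hsig : ∀ y : EuclideanSpace ℝ (Fin n),
      Real.sqrt (∑ i, ⟪a i, y⟫ ^ 2) ≤ smax * ‖y‖)
    (x xs : EuclideanSpace ℝ (Fin n)) (q' : ℝ) (hq' : q' ∈ Set.Ioo (0:ℝ) 1) :
    quantile (Multiset.map (fun i => |⟪x - xs, a i⟫|) Finset.univ.val) q' ≤
        (smax * Real.sqrt n / (Real.sqrt m * Real.sqrt (1 - q'))) * (‖x - xs‖ / Real.sqrt n) ∧
      (smax * Real.sqrt n / (Real.sqrt m * Real.sqrt (1 - q'))) * (‖x - xs‖ / Real.sqrt n)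
        = smax * ‖x - xs‖ / (Real.sqrt m * Real.sqrt (1 - q')) := by
  obtain ⟨hq0, hq1⟩ := hq'
  have hq_compl : 0 < 1 - q' := by linarith
  have hsqrt_n : Real.sqrt n ≠ 0 := by positivity
  have heq : (smax * Real.sqrt n / (Real.sqrt m * Real.sqrt (1 - q'))) * (‖x - xs‖ / Real.sqrt n)
      = smax * ‖x - xs‖ / (Real.sqrt m * Real.sqrt (1 - q')) := by
    field_simp
  refine ⟨heq ▸ ?_, heq⟩
  set s := Multiset.map (fun i => |⟪x - xs, a i⟫|) Finset.univ.val
  have hs : ∀ z ∈ s, 0 ≤ z := by simp [s]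
  have hcard : s.card = m := by simp [s]
  have hsum : (s.map (· ^ 2)).sum = ∑ i, ⟪a i, x - xs⟫ ^ 2 := by
    rw [Finset.sum_eq_multiset_sum, Multiset.map_map]
    exact congrArg Multiset.sum
      (Multiset.map_congr rfl fun i _ => by simp [sq_abs, real_inner_comm])
  have hmarkov := one_sub_mul_card_mul_quantile_sq_le_sum_sq hs hq0.le
  rw [hcard, hsum] at hmarkov
  rw [le_div_iff₀ (by positivity)]
  calc quantile s q' * (Real.sqrt m * Real.sqrt (1 - q'))
      = Real.sqrt ((1 - q') * m * quantile s q' ^ 2) := by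
        rw [Real.sqrt_mul (by positivity), Real.sqrt_sq (quantile_nonneg hs q'),
          Real.sqrt_mul hq_compl.le]
        ring
    _ ≤ Real.sqrt (∑ i, ⟪a i, x - xs⟫ ^ 2) := Real.sqrt_le_sqrt hmarkov
    _ ≤ smax * ‖x - xs‖ := hsig _

/-- Upper bound for the uncorrupted quantile: for a matrix with unit-norm rows `a_i`
and largest singular value bounded by `smax`, the `q'`-quantile of the ideal residuals
`|⟨x - x*, a_i⟩|` satisfies
`Q̃_{q'}(x) ≤ (smax √n/(√m √(1-q'))) ⬝ ‖x - x*‖/√n = smax ‖x - x*‖/(√m √(1-q'))`. -/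
theorem ideal_quantile_upper_bound (m n : ℕ) (hm : 0 < m) (hn : 0 < n)
    (a : Fin m → EuclideanSpace ℝ (Fin n)) (ha : ∀ i, ‖a i‖ = 1)
    (smax : ℝ) (hs0 : 0 ≤ smax)
    (hsig : ∀ y : EuclideanSpace ℝ (Fin n),
      Real.sqrt (∑ i, ⟪a i, y⟫ ^ 2) ≤ smax * ‖y‖)
    (x xs : EuclideanSpace ℝ (Fin n)) (q' : ℝ) (hq' : q' ∈ Set.Ioo (0:ℝ) 1) :
    quantile (Multiset.map (fun i => |⟪x - xs, a i⟫|) Finset.univ.val) q' ≤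
        (smax * Real.sqrt n / (Real.sqrt m * Real.sqrt (1 - q'))) * (‖x - xs‖ / Real.sqrt n) ∧
      (smax * Real.sqrt n / (Real.sqrt m * Real.sqrt (1 - q'))) * (‖x - xs‖ / Real.sqrt n)
        = smax * ‖x - xs‖ / (Real.sqrt m * Real.sqrt (1 - q')) :=
  ideal_quantile_upper_bound_general m n hm hn a smax hsig x xs q' hq'
end

section
/- Let z_1 ≤ z_2 ≤ ... ≤ z_m be real numbers (residuals over all m rows), and suppose at most βm of the indices are 'corrupted'. Let q ∈ (β, 1−β). Then the q-quantile of the full (possibly corrupted) residual multiset lies between the (q−β)-quantile and the (q+β)-quantile of the uncorrupted residual multiset: Q̃_{q−β}(x) ≤ Q_q(x) ≤ Q̃_{q+β}(x). -/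
/-!
If two families of `m` reals agree off a set `B` of at most `t` indices, then for every level `c`
the number of entries `≤ c` changes by at most `t`. Since the `j`-th smallest entry of a family is
`≤ c` exactly when at least `j + 1` entries are `≤ c`, order statistics are shifted by at most
`t` positions: the `j`-th smallest value of one family is at most the `(j + t)`-th of the other.
With `qm = k` and `βm = t` integers, the three quantiles are the `(k - t)`-th, `k`-th and
`(k + t)`-th smallest values.
-/

open scoped RealInnerProductSpace Classical

open Finset

namespace List

variable {α : Type*} [LinearOrder α]

theorem SortedLE.getElem_le_iff_lt_countP {l : List α} (hl : l.SortedLE) {j : ℕ}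
    (hj : j < l.length) (c : α) : l[j] ≤ c ↔ j < l.countP (· ≤ c) := by
  constructor
  · intro hjc
    have hprefix : (l.take (j + 1)).countP (· ≤ c) = j + 1 := by
      rw [countP_eq_length.2, length_take_of_le hj]
      intro x hx
      obtain ⟨i, hi, rfl⟩ := mem_iff_getElem.1 hx
      rw [getElem_take, decide_eq_true_eq]
      exact (hl.getElem_le_getElem_of_le (by rw [length_take] at hi; omega)).trans hjc
    calc j < (l.take (j + 1)).countP (· ≤ c) := by omega
      _ ≤ l.countP (· ≤ c) := (take_sublist _ _).countP_le
  · intro hcount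
    by_contra! hcj
    have hsuffix : (l.drop j).countP (· ≤ c) = 0 := by
      rw [countP_eq_zero]
      intro x hx
      obtain ⟨i, hi, rfl⟩ := mem_iff_getElem.1 hx
      rw [getElem_drop, decide_eq_true_eq, not_le]
      exact hcj.trans_le (hl.getElem_le_getElem_of_le (by omega))
    have hprefix : (l.take j).countP (· ≤ c) ≤ j := countP_le_length.trans (length_take_le _ _)
    have hsplit := countP_append (p := fun x => decide (x ≤ c)) (l₁ := l.take j) (l₂ := l.drop j)
    rw [take_append_drop] at hsplit
    omega

end List

namespace Multiset

variable {α : Type*} [LinearOrder α]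

theorem getD_sort_le_iff_lt_countP {s : Multiset α} {j : ℕ} (hj : j < card s) (d c : α) :
    (s.sort (· ≤ ·)).getD j d ≤ c ↔ j < s.countP (· ≤ c) := by
  have hj' : j < (s.sort (· ≤ ·)).length := by rwa [length_sort]
  rw [List.getD_eq_getElem _ _ hj', (pairwise_sort s _).sortedLE.getElem_le_iff_lt_countP hj',
    ← coe_countP, sort_eq]

end Multiset

section OrderStatistics

variable {ι α : Type*} [Fintype ι]

theorem countP_map_univ_val (f : ι → α) (p : α → Prop) [DecidablePred p] :
    (univ.val.map f).countP p = #{i | p (f i)} := by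
  rw [Multiset.countP_map]
  rfl

theorem getD_sort_map_le_getD_sort_map [LinearOrder α] {f g : ι → α} {B : Finset ι}
    (hfg : ∀ i ∉ B, f i = g i) {j j' : ℕ} (hjj' : j + #B ≤ j') (hj' : j' < Fintype.card ι)
    (d : α) :
    ((univ.val.map f).sort (· ≤ ·)).getD j d ≤ ((univ.val.map g).sort (· ≤ ·)).getD j' d := by
  set c := ((univ.val.map g).sort (· ≤ ·)).getD j' d
  set A : Finset ι := {i | g i ≤ c}
  have hA : j' < #A := by
    rw [← countP_map_univ_val g (· ≤ c)]
    exact (Multiset.getD_sort_le_iff_lt_countP (by simpa using hj') d c).1 le_rfl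
  have hsub : A \ B ⊆ ({i | f i ≤ c} : Finset ι) := by
    intro i hi
    simp only [A, mem_sdiff, mem_filter_univ] at hi ⊢
    exact hfg i hi.2 ▸ hi.1
  have hj : j < Multiset.card (univ.val.map f) := by
    rw [Multiset.card_map, card_val, card_univ]
    omega
  rw [Multiset.getD_sort_le_iff_lt_countP hj, countP_map_univ_val]
  calc j < #A - #B := by omega
    _ ≤ #(A \ B) := le_card_sdiff _ _
    _ ≤ #{i | f i ≤ c} := card_le_card hsub

end OrderStatistics

theorem quantile_eq_getD_sort {s : Multiset ℝ} {q : ℝ} {k : ℕ}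
    (hk : (k : ℝ) = q * Multiset.card s) (hk0 : 0 < k) :
    quantile s q = (s.sort (· ≤ ·)).getD (k - 1) 0 := by
  rw [quantile, ← hk, Nat.floor_natCast, max_eq_left hk0]

theorem quantile_sandwich_general (m n : ℕ) (hm : 0 < m)
    (a : Fin m → EuclideanSpace ℝ (Fin n)) (b : Fin m → ℝ)
    (x xs : EuclideanSpace ℝ (Fin n)) (B : Finset (Fin m)) (β q : ℝ)
    (hq1 : β < q) (hq2 : q < 1 - β)
    (hB : (B.card : ℝ) ≤ β * m)
    (hb : ∀ i ∉ B, b i = ⟪a i, xs⟫)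
    (hqm : ∃ k : ℕ, (k : ℝ) = q * m) (hβm : ∃ k : ℕ, (k : ℝ) = β * m) :
    quantile (Multiset.map (fun i => |⟪x - xs, a i⟫|) Finset.univ.val) (q - β) ≤
        quantile (Multiset.map (fun i => |b i - ⟪a i, x⟫|) Finset.univ.val) q ∧
      quantile (Multiset.map (fun i => |b i - ⟪a i, x⟫|) Finset.univ.val) q ≤
        quantile (Multiset.map (fun i => |⟪x - xs, a i⟫|) Finset.univ.val) (q + β) := by
  obtain ⟨k, hk⟩ := hqm
  obtain ⟨t, ht⟩ := hβm
  have hm' : (0 : ℝ) < m := Nat.cast_pos.2 hm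
  have htk : t < k := by exact_mod_cast (show (t : ℝ) < k by rw [ht, hk]; gcongr)
  have hkt : k + t < m := by exact_mod_cast (show (k + t : ℝ) < m by rw [hk, ht]; nlinarith)
  have hBt : #B ≤ t := by exact_mod_cast hB.trans ht.ge
  have hres : ∀ i ∉ B, |b i - ⟪a i, x⟫| = |⟪x - xs, a i⟫| := fun i hi => by
    rw [hb i hi, inner_sub_left, real_inner_comm x, real_inner_comm xs, abs_sub_comm]
  have hcard : ∀ f : Fin m → ℝ, Multiset.card (univ.val.map f) = m := by simp
  rw [quantile_eq_getD_sort (k := k - t) (by push_cast [hcard, htk.le, hk, ht]; ring) (by omega),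
    quantile_eq_getD_sort (k := k) (by rw [hcard, hk]) (by omega),
    quantile_eq_getD_sort (k := k + t) (by push_cast [hcard, hk, ht]; ring) (by omega)]
  rw [← Fintype.card_fin m] at hkt
  exact ⟨getD_sort_map_le_getD_sort_map (fun i hi => (hres i hi).symm) (by omega) (by omega) 0,
    getD_sort_map_le_getD_sort_map hres (by omega) (by omega) 0⟩

/-- Quantile sandwich under `(βm)`-sparse corruption: if at most `βm` measurements
are corrupted (outside the corruption set `B` one has `b_i = ⟨a_i, x*⟩`), and
`β < q < 1 - β`, then the `q`-quantile of the corrupted residuals lies between the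
`(q-β)`- and `(q+β)`-quantiles of the uncorrupted residuals:
`Q̃_{q-β}(x) ≤ Q_q(x) ≤ Q̃_{q+β}(x)`.  (Following the paper's convention, the relevant
proportions of `m` are assumed to be integers.) -/
theorem quantile_sandwich (m n : ℕ) (hm : 0 < m)
    (a : Fin m → EuclideanSpace ℝ (Fin n)) (b : Fin m → ℝ)
    (x xs : EuclideanSpace ℝ (Fin n)) (B : Finset (Fin m)) (β q : ℝ)
    (hβ : 0 ≤ β) (hq1 : β < q) (hq2 : q < 1 - β)
    (hB : (B.card : ℝ) ≤ β * m)
    (hb : ∀ i ∉ B, b i = ⟪a i, xs⟫)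
    (hqm : ∃ k : ℕ, (k : ℝ) = q * m) (hβm : ∃ k : ℕ, (k : ℝ) = β * m)
    (hqβm : ∃ k : ℕ, (k : ℝ) = (q - β) * m) (hqβm' : ∃ k : ℕ, (k : ℝ) = (q + β) * m) :
    quantile (Multiset.map (fun i => |⟪x - xs, a i⟫|) Finset.univ.val) (q - β) ≤
        quantile (Multiset.map (fun i => |b i - ⟪a i, x⟫|) Finset.univ.val) q ∧
      quantile (Multiset.map (fun i => |b i - ⟪a i, x⟫|) Finset.univ.val) q ≤
        quantile (Multiset.map (fun i => |⟪x - xs, a i⟫|) Finset.univ.val) (q + β) :=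
  quantile_sandwich_general m n hm a b x xs B β q hq1 hq2 hB hb hqm hβm
end

section
/- Fix x_k ∈ R^n, q ∈ (0,1), ε_u ∈ (0, 1−q), and β ∈ (0, 1−q−ε_u). Suppose the set S_u = {i ∈ [m] : |⟨x_k − x*, a_i⟩| ≤ Q̃_{q+β+ε_u}(x_k)} has cardinality at least (q+ε_u)m. If i_1, ..., i_D are drawn i.i.d. uniformly from [m], then with probability at least 1 − exp(−D_KL(q ‖ q+ε_u)·D), at least qD of the drawn indices lie in S_u, and consequently the q-quantile of the subsampled residuals {|b_{i_j} − ⟨a_{i_j}, x_k⟩|}_{j=1}^D is at most Q̃_{q+β+ε_u}(x_k). -/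
open scoped RealInnerProductSpace Classical

/-- Binary Kullback–Leibler divergence between Bernoulli(p) and Bernoulli(q). -/
noncomputable def klBer (p q : ℝ) : ℝ :=
  p * Real.log (p / q) + (1 - p) * Real.log ((1 - p) / (1 - q))

/-!
Weight an index tuple `s` by `exp (-c · #{j | s j ∈ S_u})` with a tilt `c ≥ 0`. Every tuple with
fewer than `qD` hits has weight at least `exp (-c q D)`, and the total weight factorizes as
`(|S_u| e^{-c} + |S_uᶜ|)^D ≤ (m (r e^{-c} + 1 - r))^D` for `r = q + ε_u`; at the optimal tilt
`e^c = r(1-q) / (q(1-r))` this Chernoff bound becomes `exp (-D_KL(q‖r) D) m^D`. A tuple with at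
least `qD` hits has at least `⌊qD⌋` subsampled residuals `≤ Q̃`, so its `q`-quantile is `≤ Q̃`.
-/

open Finset Real

theorem List.Pairwise.getD_le_of_lt_countP {α : Type*} [LinearOrder α] {Q d : α} :
    ∀ {l : List α}, l.Pairwise (· ≤ ·) → ∀ {k : ℕ},
      k < l.countP (· ≤ Q) → l.getD k d ≤ Q
  | [], _, _, hk => by simp at hk
  | a :: l, hl, 0, hk => by
    obtain ⟨x, hx, hxQ⟩ := List.countP_pos_iff.mp hk
    rw [List.getD_cons_zero]
    rcases List.mem_cons.mp hx with rfl | hx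
    · simpa using hxQ
    · exact ((List.pairwise_cons.mp hl).1 x hx).trans (of_decide_eq_true hxQ)
  | a :: l, hl, k + 1, hk => by
    rw [List.getD_cons_succ]
    refine (List.pairwise_cons.mp hl).2.getD_le_of_lt_countP ?_
    rw [List.countP_cons] at hk
    split_ifs at hk <;> omega

theorem quantile_le_of_mul_card_le_countP {M : Multiset ℝ} {q Q : ℝ} (hq : 0 < q) (hM : M ≠ 0)
    (h : q * Multiset.card M ≤ Multiset.countP (· ≤ Q) M) : quantile M q ≤ Q := by
  have hpos : 0 < Multiset.countP (· ≤ Q) M := by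
    have : (0 : ℝ) < Multiset.card M := by simpa [Nat.pos_iff_ne_zero] using hM
    exact_mod_cast (mul_pos hq this).trans_le h
  have hfloor := Nat.floor_le_of_le h
  apply List.Pairwise.getD_le_of_lt_countP (Multiset.pairwise_sort _ _)
  rw [← Multiset.coe_countP, Multiset.sort_eq]
  omega

theorem quantile_map_univ_le {ι : Type*} [Fintype ι] [Nonempty ι] {f : ι → ℝ} {q Q : ℝ}
    (hq : 0 < q) (h : q * Fintype.card ι ≤ #{j | f j ≤ Q}) :
    quantile (univ.val.map f) q ≤ Q := by
  refine quantile_le_of_mul_card_le_countP hq (by simp [univ_nonempty.ne_empty]) ?_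
  rw [Multiset.countP_map, Multiset.card_map]
  exact h

theorem card_filter_lt_le_exp_mul_sum_exp {β : Type*} [Fintype β] (f : β → ℝ) (t : ℝ) {c : ℝ}
    (hc : 0 ≤ c) : (#{s | f s < t} : ℝ) ≤ exp (c * t) * ∑ s, exp (-c * f s) := by
  rw [mul_sum, card_eq_sum_ones, Nat.cast_sum]
  calc ∑ s ∈ {s | f s < t}, ((1 : ℕ) : ℝ)
      ≤ ∑ s ∈ {s | f s < t}, exp (c * t) * exp (-c * f s) := by
        refine sum_le_sum fun s hs => ?_
        rw [← exp_add, Nat.cast_one, one_le_exp_iff]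
        nlinarith [(mem_filter.mp hs).2]
    _ ≤ ∑ s, exp (c * t) * exp (-c * f s) :=
        sum_le_sum_of_subset_of_nonneg (subset_univ _) fun _ _ _ => by positivity

section Chernoff

variable {ι α : Type*} [Fintype ι] [DecidableEq ι] [Fintype α] [DecidableEq α]

theorem sum_exp_neg_mul_card_filter_mem (T : Finset α) (c : ℝ) :
    ∑ s : ι → α, exp (-c * #{j | s j ∈ T}) =
      (#T * exp (-c) + #Tᶜ) ^ Fintype.card ι := by
  have hprod (s : ι → α) :
      exp (-c * #{j | s j ∈ T}) = ∏ j, if s j ∈ T then exp (-c) else 1 := by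
    rw [prod_ite, prod_const, prod_const_one, mul_one, mul_comm, exp_nat_mul]
  simp_rw [hprod, ← Fintype.prod_sum (fun _ i => if i ∈ T then exp (-c) else 1), prod_const,
    card_univ, sum_ite, sum_const, nsmul_eq_mul, mul_one, filter_not, filter_mem_eq_inter,
    univ_inter, ← compl_eq_univ_sdiff]

theorem card_filter_card_filter_mem_lt_le_tilt {T : Finset α} {q r c : ℝ} (hc : 0 ≤ c)
    (hT : r * Fintype.card α ≤ #T) :
    (#{s : ι → α | (#{j | s j ∈ T} : ℝ) < q * Fintype.card ι} : ℝ) ≤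
      (exp (c * q) * (r * exp (-c) + (1 - r))) ^ Fintype.card ι *
        Fintype.card α ^ Fintype.card ι := by
  have hbase : (#T * exp (-c) + #Tᶜ : ℝ) ≤ Fintype.card α * (r * exp (-c) + (1 - r)) := by
    have : exp (-c) ≤ 1 := exp_le_one_iff.mpr (by linarith)
    rw [card_compl, Nat.cast_sub (card_le_univ T)]
    nlinarith
  calc _ ≤ exp (c * (q * Fintype.card ι)) * ∑ s : ι → α, exp (-c * #{j | s j ∈ T}) :=
        card_filter_lt_le_exp_mul_sum_exp _ _ hc
    _ = exp (c * q) ^ Fintype.card ι * (#T * exp (-c) + #Tᶜ) ^ Fintype.card ι := by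
        rw [sum_exp_neg_mul_card_filter_mem, ← exp_nat_mul]
        ring_nf
    _ ≤ exp (c * q) ^ Fintype.card ι *
          (Fintype.card α * (r * exp (-c) + (1 - r))) ^ Fintype.card ι := by
        gcongr
    _ = _ := by rw [mul_pow, mul_pow]; ring

theorem exp_neg_klBer_eq_of_exp_eq {q r c : ℝ} (hq0 : 0 < q) (hq1 : q < 1) (hr0 : 0 < r)
    (hr1 : r < 1) (hc : exp c = r * (1 - q) / (q * (1 - r))) :
    exp (-klBer q r) = exp (c * q) * (r * exp (-c) + (1 - r)) := by
  have h1q : 0 < 1 - q := by linarith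
  have h1r : 0 < 1 - r := by linarith
  have hc_log : c = log r + log (1 - q) - log q - log (1 - r) := by
    rw [← log_exp c, hc, log_div (by positivity) (by positivity),
      log_mul hr0.ne' h1q.ne', log_mul hq0.ne' h1r.ne']
    ring
  have hsum : r * exp (-c) + (1 - r) = exp (log (1 - r) - log (1 - q)) := by
    rw [exp_sub, exp_log h1r, exp_log h1q, exp_neg, hc]
    field_simp
    ring
  rw [hsum, ← exp_add, klBer, log_div hq0.ne' hr0.ne', log_div h1q.ne' h1r.ne', hc_log]
  ring_nf

theorem card_filter_card_filter_mem_lt_le_exp_neg_klBer {T : Finset α} {q r : ℝ} (hq : 0 < q)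
    (hqr : q ≤ r) (hr : r < 1) (hT : r * Fintype.card α ≤ #T) :
    (#{s : ι → α | (#{j | s j ∈ T} : ℝ) < q * Fintype.card ι} : ℝ) ≤
      exp (-klBer q r * Fintype.card ι) * Fintype.card α ^ Fintype.card ι := by
  have h1q : 0 < 1 - q := by linarith
  have h1r : 0 < 1 - r := by linarith
  set c := log (r * (1 - q) / (q * (1 - r)))
  have hc : exp c = r * (1 - q) / (q * (1 - r)) :=
    exp_log (div_pos (mul_pos (hq.trans_le hqr) h1q) (mul_pos hq h1r))
  have hc0 : 0 ≤ c := log_nonneg (by rw [le_div_iff₀ (by positivity)]; nlinarith)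
  rw [mul_comm (-klBer q r), exp_nat_mul,
    exp_neg_klBer_eq_of_exp_eq hq (by linarith) (by linarith) hr hc]
  exact card_filter_card_filter_mem_lt_le_tilt hc0 hT

end Chernoff

theorem subsampled_quantile_upper_general (m n D : ℕ) (hD : 0 < D)
    (a : Fin m → EuclideanSpace ℝ (Fin n))
    (b : Fin m → ℝ) (xk : EuclideanSpace ℝ (Fin n))
    (q εu : ℝ) (hq : q ∈ Set.Ioo (0:ℝ) 1) (hεu : εu ∈ Set.Ioo (0:ℝ) (1 - q))
    (Qtil : ℝ)
    (Su : Finset (Fin m))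
    (hSu : Su = Finset.univ.filter fun i => |b i - ⟪a i, xk⟫| ≤ Qtil)
    (hScard : (q + εu) * m ≤ (Su.card : ℝ)) :
    (1 - Real.exp (-klBer q (q + εu) * D)) * (m : ℝ) ^ D ≤
      ((Finset.univ.filter fun s : Fin D → Fin m =>
          (q * D ≤ ((Finset.univ.filter fun j : Fin D => s j ∈ Su).card : ℝ)) ∧
          quantile (Multiset.map (fun j : Fin D => |b (s j) - ⟪a (s j), xk⟫|)
            Finset.univ.val) q ≤ Qtil).card : ℝ) := by
  have : Nonempty (Fin D) := Fin.pos_iff_nonempty.mp hD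
  have hquantile (s : Fin D → Fin m) (hs : q * D ≤ #{j | s j ∈ Su}) :
      quantile (Multiset.map (fun j => |b (s j) - ⟪a (s j), xk⟫|) univ.val) q ≤ Qtil := by
    refine quantile_map_univ_le hq.1 ?_
    rw [Fintype.card_fin]
    exact hs.trans (by exact_mod_cast card_le_card fun j hj => by simpa [hSu] using hj)
  have hbad := card_filter_card_filter_mem_lt_le_exp_neg_klBer (ι := Fin D) (T := Su)
    (r := q + εu) hq.1 (by linarith [hεu.1]) (by linarith [hεu.2]) (by simpa using hScard)
  have hsplit : (#{s : Fin D → Fin m | q * D ≤ #{j | s j ∈ Su}} : ℝ) +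
      #{s : Fin D → Fin m | (#{j | s j ∈ Su} : ℝ) < q * D} = m ^ D := by
    exact_mod_cast (by
      simpa only [not_le, card_univ, Fintype.card_fun, Fintype.card_fin] using
        card_filter_add_card_filter_not (s := univ)
          fun s : Fin D → Fin m => q * D ≤ #{j | s j ∈ Su})
  simp only [Fintype.card_fin] at hbad
  rw [filter_congr fun s _ => and_iff_left_of_imp (hquantile s)]
  linarith

/-- Subsampled quantile, upper bound.  Let `Q̃ = Q̃_{q+β+ε_u}(x_k)` be the
`(q+β+ε_u)`-quantile of the ideal residuals, and let `S_u` be the set of indices whose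
(possibly corrupted) residual is at most `Q̃`; suppose `|S_u| ≥ (q+ε_u) m`.  If
`i_1, …, i_D` are drawn i.i.d. uniformly from `[m]` (modelled by uniform counting over
all `m^D` tuples), then with probability at least `1 - exp(-D_KL(q‖q+ε_u) D)`, at
least `qD` of the drawn indices lie in `S_u` and consequently the `q`-quantile of the
subsampled residuals is at most `Q̃`. -/
theorem subsampled_quantile_upper (m n D : ℕ) (hm : 0 < m) (hD : 0 < D)
    (a : Fin m → EuclideanSpace ℝ (Fin n)) (ha : ∀ i, ‖a i‖ = 1)
    (b : Fin m → ℝ) (xk xs : EuclideanSpace ℝ (Fin n))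
    (q εu β : ℝ) (hq : q ∈ Set.Ioo (0:ℝ) 1) (hεu : εu ∈ Set.Ioo (0:ℝ) (1 - q))
    (hβ : β ∈ Set.Ioo (0:ℝ) (1 - q - εu))
    (Qtil : ℝ)
    (hQtil : Qtil = quantile (Multiset.map (fun i => |⟪xk - xs, a i⟫|) Finset.univ.val)
        (q + β + εu))
    (Su : Finset (Fin m))
    (hSu : Su = Finset.univ.filter fun i => |b i - ⟪a i, xk⟫| ≤ Qtil)
    (hScard : (q + εu) * m ≤ (Su.card : ℝ)) :
    (1 - Real.exp (-klBer q (q + εu) * D)) * (m : ℝ) ^ D ≤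
      ((Finset.univ.filter fun s : Fin D → Fin m =>
          (q * D ≤ ((Finset.univ.filter fun j : Fin D => s j ∈ Su).card : ℝ)) ∧
          quantile (Multiset.map (fun j : Fin D => |b (s j) - ⟪a (s j), xk⟫|)
            Finset.univ.val) q ≤ Qtil).card : ℝ) :=
  subsampled_quantile_upper_general m n D hD a b xk q εu hq hεu Qtil Su hSu hScard
end

section
/- Fix x_k ∈ R^n, q ∈ (0,1), ε_l ∈ (0, q), and β ∈ (0, q−ε_l). Let B ⊆ [m] with |B| ≤ βm be the corruption set and B^c its complement. The set S_l = {i ∈ B^c : |⟨x_k − x*, a_i⟩| ≥ Q̃_{(q−β−ε_l)/(1−β)}(x_k, B^c)} has cardinality at least (1−q+ε_l)m. If i_1, ..., i_D are drawn i.i.d. uniformly from [m], then with probability at least 1 − exp(−D_KL(q ‖ q−ε_l)·D), more than (1−q)D of the drawn indices lie in S_l, and consequently the q-quantile of the subsampled residuals is at least Q̃_{(q−β−ε_l)/(1−β)}(x_k, B^c) ≥ Q̃_{q−β−ε_l}(x_k). -/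
open scoped RealInnerProductSpace Classical

/-!
Write `q' = (q - β - εl) / (1 - β)`. There are at least `(1 - β) m` uncorrupted residuals, and at
least a `1 - q'` fraction of them lie at or above their `q'`-quantile `Qc`; this gives
`|S_l| ≥ (1 - q + εl) m`. By the Chernoff bound (exponential tilting of the uniform product
measure), a uniform `D`-tuple of indices hits `S_l` at most `(1 - q) D` times with probability
at most `exp (-D · KL(q ‖ q - εl))`. On every other tuple the residuals at the hits of `S_l` are
ideal and `≥ Qc`, so fewer than `qD` sampled residuals lie below `Qc`, which puts the sample's
`q`-quantile at or above `Qc`. Finally, the uncorrupted residuals form a sub-multiset of all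
residuals whose `q'`-rank dominates the `(q - β - εl)`-rank of the whole, so the full quantile
is at most `Qc`.
-/

namespace List

variable {L : List ℝ} {i : ℕ}

theorem Pairwise.le_getElem_of_mem_take (hL : L.Pairwise (· ≤ ·)) (hi : i < L.length) {y : ℝ}
    (hy : y ∈ L.take i) : y ≤ L[i] := by
  rw [← take_append_drop i L, pairwise_append] at hL
  exact hL.2.2 y hy L[i] (by rw [drop_eq_getElem_cons hi]; exact mem_cons_self)

theorem Pairwise.getElem_le_of_mem_drop (hL : L.Pairwise (· ≤ ·)) (hi : i < L.length) {y : ℝ}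
    (hy : y ∈ L.drop i) : L[i] ≤ y := by
  rw [drop_eq_getElem_cons hi] at hy
  rw [← take_append_drop i L, pairwise_append, drop_eq_getElem_cons hi, pairwise_cons] at hL
  rcases mem_cons.mp hy with rfl | hy
  · exact le_rfl
  · exact hL.2.1.1 y hy

theorem Pairwise.succ_le_countP_le_getElem (hL : L.Pairwise (· ≤ ·)) (hi : i < L.length) :
    i + 1 ≤ L.countP (· ≤ L[i]) := by
  have hsplit := congrArg (countP (· ≤ L[i])) (take_append_drop i L)
  rw [countP_append] at hsplit
  have htake : (L.take i).countP (· ≤ L[i]) = i := by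
    rw [countP_eq_length.mpr fun y hy => by simpa using hL.le_getElem_of_mem_take hi hy]
    simp [hi.le]
  have hdrop : 0 < (L.drop i).countP (· ≤ L[i]) :=
    countP_pos_iff.mpr ⟨L[i], by rw [drop_eq_getElem_cons hi]; exact mem_cons_self, by simp⟩
  omega

theorem Pairwise.countP_lt_getElem_le (hL : L.Pairwise (· ≤ ·)) (hi : i < L.length) :
    L.countP (· < L[i]) ≤ i := by
  have hsplit := congrArg (countP (· < L[i])) (take_append_drop i L)
  rw [countP_append] at hsplit
  have hdrop : (L.drop i).countP (· < L[i]) = 0 :=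
    countP_eq_zero.mpr fun y hy => by simpa using hL.getElem_le_of_mem_drop hi hy
  have htake : (L.take i).countP (· < L[i]) ≤ i := countP_le_length.trans (by simp)
  omega

end List

/-- The index, counted from `1`, of the order statistic that `quantile s q` returns. -/
noncomputable def quantileRank (s : Multiset ℝ) (q : ℝ) : ℕ :=
  max ⌊q * Multiset.card s⌋₊ 1

namespace Multiset

variable {s t : Multiset ℝ} {q q' x : ℝ}

theorem one_le_quantileRank : 1 ≤ quantileRank s q := le_max_right _ _

theorem quantileRank_le_card (hq : q ≤ 1) (hs : s ≠ 0) : quantileRank s q ≤ card s := by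
  refine max_le (Nat.floor_le_of_le ?_) (card_pos.mpr hs)
  nlinarith [(Nat.cast_nonneg (card s) : (0 : ℝ) ≤ card s)]

theorem card_filter_eq_countP_sort (p : ℝ → Prop) [DecidablePred p] :
    card (s.filter p) = (s.sort (· ≤ ·)).countP (fun y => decide (p y)) := by
  rw [← countP_eq_card_filter, ← coe_countP, sort_eq]

theorem quantileRank_sub_one_lt_length (h : quantileRank s q ≤ card s) :
    quantileRank s q - 1 < (s.sort (· ≤ ·)).length := by
  have := one_le_quantileRank (s := s) (q := q)
  rw [length_sort]
  omega

theorem quantile_eq_getElem (h : quantileRank s q ≤ card s) :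
    quantile s q = (s.sort (· ≤ ·))[quantileRank s q - 1]'(quantileRank_sub_one_lt_length h) :=
  List.getD_eq_getElem _ _ _

theorem quantileRank_le_card_filter_le_quantile (h : quantileRank s q ≤ card s) :
    quantileRank s q ≤ card (s.filter (· ≤ quantile s q)) := by
  have := one_le_quantileRank (s := s) (q := q)
  rw [card_filter_eq_countP_sort, quantile_eq_getElem h]
  have := (pairwise_sort s (· ≤ ·)).succ_le_countP_le_getElem
    (quantileRank_sub_one_lt_length h)
  omega

theorem card_filter_lt_quantile_lt (h : quantileRank s q ≤ card s) :
    card (s.filter (· < quantile s q)) < quantileRank s q := by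
  have := one_le_quantileRank (s := s) (q := q)
  rw [card_filter_eq_countP_sort, quantile_eq_getElem h]
  have := (pairwise_sort s (· ≤ ·)).countP_lt_getElem_le
    (quantileRank_sub_one_lt_length h)
  omega

theorem quantile_le_of_quantileRank_le (h : quantileRank s q ≤ card (s.filter (· ≤ x))) :
    quantile s q ≤ x := by
  have hs : quantileRank s q ≤ card s := h.trans (card_le_card (filter_le _ _))
  by_contra! hx
  have hle : s.filter (· ≤ x) ≤ s.filter (· < quantile s q) :=
    monotone_filter_right s fun y hy => hy.trans_lt hx
  have := card_filter_lt_quantile_lt hs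
  have := card_le_card hle
  omega

theorem le_quantile_of_card_filter_lt (hs : quantileRank s q ≤ card s)
    (h : card (s.filter (· < x)) < quantileRank s q) : x ≤ quantile s q := by
  by_contra! hx
  have hle : s.filter (· ≤ quantile s q) ≤ s.filter (· < x) :=
    monotone_filter_right s fun y hy => hy.trans_lt hx
  have := quantileRank_le_card_filter_le_quantile hs
  have := card_le_card hle
  omega

theorem card_filter_lt_add_card_filter_le (x : ℝ) :
    card (s.filter (· < x)) + card (s.filter (x ≤ ·)) = card s := by
  conv_rhs => rw [← filter_add_not (· < x) s]
  simp only [card_add, not_lt]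

theorem one_sub_mul_card_le_card_filter_quantile_le (hq0 : 0 ≤ q) (hq1 : q ≤ 1) :
    (1 - q) * card s ≤ card (s.filter (quantile s q ≤ ·)) := by
  rcases eq_or_ne s 0 with rfl | hs
  · simp
  have hrank := quantileRank_le_card hq1 hs
  have hlt := card_filter_lt_quantile_lt hrank
  have hsum := card_filter_lt_add_card_filter_le (s := s) (quantile s q)
  have hq_card : (0 : ℝ) ≤ q * card s := by positivity
  have hrank_le : (quantileRank s q : ℝ) ≤ q * card s + 1 := by
    rw [quantileRank, Nat.cast_max, Nat.cast_one]
    exact max_le (by linarith [Nat.floor_le hq_card]) (by linarith)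
  have hcount : card s + 1 ≤ quantileRank s q + card (s.filter (quantile s q ≤ ·)) := by omega
  have : (card s : ℝ) + 1 ≤ quantileRank s q + card (s.filter (quantile s q ≤ ·)) := by
    exact_mod_cast hcount
  linarith

theorem le_quantile_of_one_sub_mul_card_lt {k : ℕ} (hk : (k : ℝ) = q * card s) (hq1 : q ≤ 1)
    (h : (1 - q) * card s < card (s.filter (x ≤ ·))) : x ≤ quantile s q := by
  have hsum := card_filter_lt_add_card_filter_le (s := s) x
  have hsumR : (card (s.filter (· < x)) : ℝ) + card (s.filter (x ≤ ·)) = card s := by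
    exact_mod_cast hsum
  have hk_pos : 0 < k := by
    have : (0 : ℝ) < k := by
      nlinarith [(Nat.cast_nonneg _ : (0 : ℝ) ≤ card (s.filter (· < x)))]
    exact_mod_cast this
  have hrank : quantileRank s q = k := by
    rw [quantileRank, ← hk, Nat.floor_natCast]; omega
  have hk_le : k ≤ card s := by
    have : (k : ℝ) ≤ card s := by nlinarith [(Nat.cast_nonneg _ : (0 : ℝ) ≤ card s)]
    exact_mod_cast this
  refine le_quantile_of_card_filter_lt (hrank ▸ hk_le) (hrank ▸ ?_)
  have : (card (s.filter (· < x)) : ℝ) < k := by linarith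
  exact_mod_cast this

theorem quantile_le_quantile_of_le (hts : t ≤ s) (hrank : quantileRank s q' ≤ quantileRank t q)
    (ht : quantileRank t q ≤ card t) : quantile s q' ≤ quantile t q :=
  quantile_le_of_quantileRank_le <| hrank.trans <|
    (quantileRank_le_card_filter_le_quantile ht).trans (card_le_card (filter_le_filter _ hts))

end Multiset

open Finset Real

theorem neg_klBer_sub_eq {q ε : ℝ} (hε0 : 0 < ε) (hεq : ε < q) (hq1 : q < 1) :
    -klBer q (q - ε) =
      log ((q - ε) / q) - (1 - q) * log ((1 - q) * (q - ε) / (q * (1 - q + ε))) := by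
  have hq0 : 0 < q := hε0.trans hεq
  rw [klBer, show (1 : ℝ) - (q - ε) = 1 - q + ε by ring, log_div, log_div, log_div, log_div,
    log_mul, log_mul]
  · ring
  all_goals nlinarith

section Hits

variable {ι α : Type*} [Fintype ι] [DecidableEq ι] [Fintype α] [DecidableEq α] (S : Finset α)
  {q ε : ℝ}

theorem sum_pow_card_filter_mem (r : ℝ) :
    ∑ s : ι → α, r ^ #{j | s j ∈ S} = (#S * r + #Sᶜ) ^ Fintype.card ι := by
  have hbase : ∑ i : α, (if i ∈ S then r else 1) = #S * r + #Sᶜ := by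
    rw [sum_ite, sum_const, sum_const]
    simp [nsmul_eq_mul, filter_not, compl_eq_univ_sdiff]
  rw [← hbase, ← card_univ, ← prod_const, Fintype.prod_sum]
  refine Fintype.sum_congr _ _ fun s => ?_
  rw [prod_ite, prod_const, prod_const_one, mul_one]

/-- Chernoff bound by exponential tilting: weighting a tuple by `r ^ (number of hits)`, with
`r = (1 - q)(q - ε) / (q (1 - q + ε))`, makes the total weight a product over coordinates. -/
theorem card_few_hits_le (hε0 : 0 < ε) (hεq : ε < q) (hq1 : q < 1)
    (hS : (1 - q + ε) * Fintype.card α ≤ #S) :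
    (#{s : ι → α | (#{j | s j ∈ S} : ℝ) ≤ (1 - q) * Fintype.card ι} : ℝ) ≤
      exp (-klBer q (q - ε) * Fintype.card ι) * Fintype.card α ^ Fintype.card ι := by
  have hq0 : 0 < q := hε0.trans hεq
  set D := Fintype.card ι
  set r := (1 - q) * (q - ε) / (q * (1 - q + ε)) with hr
  have hr0 : 0 < r := by rw [hr]; apply div_pos <;> nlinarith
  have hr1 : r ≤ 1 := by rw [hr, div_le_one (by nlinarith)]; nlinarith
  have hbase : #S * r + #Sᶜ ≤ (q - ε) / q * Fintype.card α := by
    have hcompl : (#Sᶜ : ℝ) = Fintype.card α - #S := by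
      rw [card_compl, Nat.cast_sub (card_le_univ S)]
    have htilt : (1 - q + ε) * (1 - r) = ε / q := by
      have : 1 - q + ε ≠ 0 := by linarith
      rw [hr]; field_simp; ring
    have : (1 - q + ε) * Fintype.card α * (1 - r) ≤ #S * (1 - r) :=
      mul_le_mul_of_nonneg_right hS (by linarith)
    rw [hcompl, sub_div, div_self hq0.ne']
    nlinarith
  have hpow : ((q - ε) / q) ^ D = exp (-klBer q (q - ε) * D) * r ^ ((1 - q) * D) := by
    rw [rpow_def_of_pos hr0, ← exp_add, neg_klBer_sub_eq hε0 hεq hq1, ← hr,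
      ← exp_log (by positivity : 0 < (q - ε) / q), ← exp_nat_mul, exp_log (by positivity)]
    ring_nf
  calc (#{s : ι → α | (#{j | s j ∈ S} : ℝ) ≤ (1 - q) * D} : ℝ)
      = #{s : ι → α | (#{j | s j ∈ S} : ℝ) ≤ (1 - q) * D} * r ^ ((1 - q) * D) /
          r ^ ((1 - q) * D) := by
        field_simp
    _ ≤ (∑ s : ι → α, r ^ #{j | s j ∈ S}) / r ^ ((1 - q) * D) := by
        gcongr
        rw [← nsmul_eq_mul]
        refine (card_nsmul_le_sum _ _ _ fun s hs => ?_).trans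
          (sum_le_sum_of_subset_of_nonneg (subset_univ _) fun _ _ _ => by positivity)
        rw [← rpow_natCast]
        exact rpow_le_rpow_of_exponent_ge hr0 hr1 (mem_filter.mp hs).2
    _ = (#S * r + #Sᶜ) ^ D / r ^ ((1 - q) * D) := by rw [sum_pow_card_filter_mem]
    _ ≤ ((q - ε) / q * Fintype.card α) ^ D / r ^ ((1 - q) * D) := by gcongr
    _ = exp (-klBer q (q - ε) * D) * Fintype.card α ^ D := by
        rw [mul_pow, hpow]; field_simp

theorem le_card_many_hits (hε0 : 0 < ε) (hεq : ε < q) (hq1 : q < 1)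
    (hS : (1 - q + ε) * Fintype.card α ≤ #S) :
    (1 - exp (-klBer q (q - ε) * Fintype.card ι)) * Fintype.card α ^ Fintype.card ι ≤
      #{s : ι → α | (1 - q) * Fintype.card ι < #{j | s j ∈ S}} := by
  have hsplit := card_filter_add_card_filter_not (s := (univ : Finset (ι → α)))
    fun s => (1 - q) * Fintype.card ι < #{j | s j ∈ S}
  simp only [not_lt, card_univ, Fintype.card_pi, prod_const] at hsplit
  have hsplitR := congrArg (Nat.cast (R := ℝ)) hsplit
  push_cast at hsplitR
  linarith [card_few_hits_le (ι := ι) S hε0 hεq hq1 hS]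

end Hits

theorem Finset.card_filter_map_val {α : Type*} (s : Finset α) (f : α → ℝ) (p : ℝ → Prop)
    [DecidablePred p] : Multiset.card ((s.val.map f).filter p) = #{i ∈ s | p (f i)} := by
  rw [Multiset.filter_map, Multiset.card_map]
  rfl

theorem le_quantile_of_many_hits {ι α : Type*} [Fintype ι] [DecidableEq α] {S : Finset α}
    {g : α → ℝ} {x q : ℝ} {k : ℕ} (hS : ∀ i ∈ S, x ≤ g i)
    (hk : (k : ℝ) = q * Fintype.card ι) (hq1 : q ≤ 1) {s : ι → α}
    (hs : (1 - q) * Fintype.card ι < #{j | s j ∈ S}) :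
    x ≤ quantile (univ.val.map fun j => g (s j)) q := by
  have hcard : Multiset.card (univ.val.map fun j => g (s j)) = Fintype.card ι := by simp
  have hhits : #{j | s j ∈ S} ≤ #{j | x ≤ g (s j)} :=
    card_le_card fun j hj => by simp_all
  refine Multiset.le_quantile_of_one_sub_mul_card_lt (k := k) (by rwa [hcard]) hq1 ?_
  rw [hcard, card_filter_map_val]
  exact hs.trans_le (Nat.cast_le.mpr hhits)

section Uncorrupted

variable {α : Type*} [Fintype α] [DecidableEq α] (f : α → ℝ) {B : Finset α} {β p : ℝ}

theorem one_sub_mul_card_le_card_compl (hB : (#B : ℝ) ≤ β * Fintype.card α) :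
    (1 - β) * Fintype.card α ≤ #Bᶜ := by
  rw [card_compl, Nat.cast_sub (card_le_univ B)]
  linarith

theorem one_sub_sub_mul_card_le_card_filter_compl (hB : (#B : ℝ) ≤ β * Fintype.card α)
    (hp : 0 ≤ p) (hβp : β + p ≤ 1) (hβ : β < 1) :
    (1 - β - p) * Fintype.card α ≤
      #{i ∈ Bᶜ | quantile (Bᶜ.val.map f) (p / (1 - β)) ≤ f i} := by
  have h1β : 0 < 1 - β := by linarith
  rw [← card_filter_map_val]
  refine le_trans ?_ (Multiset.one_sub_mul_card_le_card_filter_quantile_le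
    (div_nonneg hp h1β.le) ((div_le_one h1β).mpr (by linarith)))
  calc (1 - β - p) * Fintype.card α = (1 - p / (1 - β)) * ((1 - β) * Fintype.card α) := by
        field_simp
    _ ≤ (1 - p / (1 - β)) * Multiset.card (Bᶜ.val.map f) := by
        rw [Multiset.card_map, card_val]
        gcongr
        · rw [sub_nonneg, div_le_one h1β]
          linarith
        · exact one_sub_mul_card_le_card_compl hB

theorem quantile_map_univ_le_quantile_map_compl [Nonempty α]
    (hB : (#B : ℝ) ≤ β * Fintype.card α) (hp : 0 ≤ p) (hβp : β + p ≤ 1) (hβ : β < 1) :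
    quantile (univ.val.map f) p ≤ quantile (Bᶜ.val.map f) (p / (1 - β)) := by
  have h1β : 0 < 1 - β := by linarith
  have hcompl := one_sub_mul_card_le_card_compl hB
  have hne : Bᶜ.val.map f ≠ 0 := by
    rw [Ne, Multiset.map_eq_zero, val_eq_zero, ← Ne, ← nonempty_iff_ne_empty, ← card_pos,
      ← Nat.cast_pos (α := ℝ)]
    have : (0 : ℝ) < Fintype.card α := by exact_mod_cast Fintype.card_pos
    exact lt_of_lt_of_le (by positivity) hcompl
  refine Multiset.quantile_le_quantile_of_le
    (Multiset.map_le_map (val_le_iff.mpr (subset_univ _))) ?_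
    (Multiset.quantileRank_le_card ((div_le_one h1β).mpr (by linarith)) hne)
  refine max_le_max (Nat.floor_le_floor ?_) le_rfl
  calc p * Multiset.card (univ.val.map f) = p / (1 - β) * ((1 - β) * Fintype.card α) := by
        rw [Multiset.card_map, card_val, card_univ]; field_simp
    _ ≤ p / (1 - β) * Multiset.card (Bᶜ.val.map f) := by
        rw [Multiset.card_map, card_val]
        gcongr

end Uncorrupted

theorem abs_inner_sub_inner {E : Type*} [NormedAddCommGroup E] [InnerProductSpace ℝ E]
    (a x y : E) : |⟪a, y⟫ - ⟪a, x⟫| = |⟪x - y, a⟫| := by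
  rw [real_inner_comm, inner_sub_left, abs_sub_comm, real_inner_comm a x, real_inner_comm a y]

theorem subsampled_quantile_lower_general (m n D : ℕ) (hm : 0 < m)
    (a : Fin m → EuclideanSpace ℝ (Fin n))
    (b : Fin m → ℝ) (xk xs : EuclideanSpace ℝ (Fin n))
    (q εl β : ℝ) (hq : q ∈ Set.Ioo (0:ℝ) 1) (hεl : εl ∈ Set.Ioo (0:ℝ) q)
    (hβ : β ∈ Set.Ioo (0:ℝ) (q - εl))
    (B : Finset (Fin m)) (hB : (B.card : ℝ) ≤ β * m)
    (hb : ∀ i ∉ B, b i = ⟪a i, xs⟫)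
    (hqD : ∃ k : ℕ, (k : ℝ) = q * D)
    (Qc : ℝ)
    (hQc : Qc = quantile (Multiset.map (fun i => |⟪xk - xs, a i⟫|) Bᶜ.val)
        ((q - β - εl) / (1 - β)))
    (Sl : Finset (Fin m))
    (hSl : Sl = Bᶜ.filter fun i => Qc ≤ |⟪xk - xs, a i⟫|) :
    ((1 - q + εl) * m ≤ (Sl.card : ℝ)) ∧
    ((1 - Real.exp (-klBer q (q - εl) * D)) * (m : ℝ) ^ D ≤
      ((Finset.univ.filter fun s : Fin D → Fin m =>
          ((1 - q) * D < ((Finset.univ.filter fun j : Fin D => s j ∈ Sl).card : ℝ)) ∧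
          Qc ≤ quantile (Multiset.map (fun j : Fin D => |b (s j) - ⟪a (s j), xk⟫|)
            Finset.univ.val) q).card : ℝ)) ∧
    quantile (Multiset.map (fun i => |⟪xk - xs, a i⟫|) Finset.univ.val) (q - β - εl) ≤ Qc := by
  obtain ⟨-, hq1⟩ := hq
  obtain ⟨hεl0, hεlq⟩ := hεl
  obtain ⟨-, hβq⟩ := hβ
  have : Nonempty (Fin m) := Fin.pos_iff_nonempty.mp hm
  have hB' : (#B : ℝ) ≤ β * Fintype.card (Fin m) := by simpa using hB
  have hSl_large : (1 - q + εl) * m ≤ #Sl := by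
    have := one_sub_sub_mul_card_le_card_filter_compl (fun i => |⟪xk - xs, a i⟫|) hB'
      (p := q - β - εl) (by linarith) (by linarith) (by linarith)
    rw [hSl, hQc]
    convert this using 2
    · ring
    · simp
  refine ⟨hSl_large, ?_, hQc ▸ quantile_map_univ_le_quantile_map_compl _ hB'
    (by linarith) (by linarith) (by linarith)⟩
  obtain ⟨k, hk⟩ := hqD
  have hmany := le_card_many_hits (ι := Fin D) Sl hεl0 hεlq hq1 (by simpa using hSl_large)
  simp only [Fintype.card_fin] at hmany
  refine hmany.trans (Nat.cast_le.mpr (card_le_card fun s hs => ?_))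
  simp only [mem_filter, mem_univ, true_and] at hs ⊢
  refine ⟨hs, le_quantile_of_many_hits (g := fun i => |b i - ⟪a i, xk⟫|) (fun i hi => ?_)
    (by simpa using hk) hq1.le (by simpa using hs)⟩
  simp only [hSl, mem_filter, mem_compl] at hi
  rw [hb i hi.1, abs_inner_sub_inner]
  exact hi.2

/-- Subsampled quantile, lower bound.  Let `Qc = Q̃_{(q-β-ε_l)/(1-β)}(x_k, Bᶜ)` be the
`(q-β-ε_l)/(1-β)`-quantile of the ideal residuals over the uncorrupted indices, and let
`S_l = {i ∈ Bᶜ : |⟨x_k - x*, a_i⟩| ≥ Qc}`.  Then `|S_l| ≥ (1-q+ε_l) m`; and if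
`i_1, …, i_D` are drawn i.i.d. uniformly from `[m]` (modelled by uniform counting over
all `m^D` tuples), then with probability at least `1 - exp(-D_KL(q‖q-ε_l) D)`, more
than `(1-q)D` of the drawn indices lie in `S_l` and consequently the `q`-quantile of
the subsampled residuals is at least `Qc`; moreover `Q̃_{q-β-ε_l}(x_k) ≤ Qc`.
(Following the paper's convention, the relevant proportions are assumed integral.) -/
theorem subsampled_quantile_lower (m n D : ℕ) (hm : 0 < m) (hD : 0 < D)
    (a : Fin m → EuclideanSpace ℝ (Fin n)) (ha : ∀ i, ‖a i‖ = 1)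
    (b : Fin m → ℝ) (xk xs : EuclideanSpace ℝ (Fin n))
    (q εl β : ℝ) (hq : q ∈ Set.Ioo (0:ℝ) 1) (hεl : εl ∈ Set.Ioo (0:ℝ) q)
    (hβ : β ∈ Set.Ioo (0:ℝ) (q - εl))
    (B : Finset (Fin m)) (hB : (B.card : ℝ) ≤ β * m)
    (hb : ∀ i ∉ B, b i = ⟪a i, xs⟫)
    (hqD : ∃ k : ℕ, (k : ℝ) = q * D)
    (hβm : ∃ k : ℕ, (k : ℝ) = β * m)
    (hrank : ∃ k : ℕ, (k : ℝ) = (q - β - εl) / (1 - β) * Bᶜ.card)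
    (Qc : ℝ)
    (hQc : Qc = quantile (Multiset.map (fun i => |⟪xk - xs, a i⟫|) Bᶜ.val)
        ((q - β - εl) / (1 - β)))
    (Sl : Finset (Fin m))
    (hSl : Sl = Bᶜ.filter fun i => Qc ≤ |⟪xk - xs, a i⟫|) :
    ((1 - q + εl) * m ≤ (Sl.card : ℝ)) ∧
    ((1 - Real.exp (-klBer q (q - εl) * D)) * (m : ℝ) ^ D ≤
      ((Finset.univ.filter fun s : Fin D → Fin m =>
          ((1 - q) * D < ((Finset.univ.filter fun j : Fin D => s j ∈ Sl).card : ℝ)) ∧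
          Qc ≤ quantile (Multiset.map (fun j : Fin D => |b (s j) - ⟪a (s j), xk⟫|)
            Finset.univ.val) q).card : ℝ)) ∧
    quantile (Multiset.map (fun i => |⟪xk - xs, a i⟫|) Finset.univ.val) (q - β - εl) ≤ Qc :=
  subsampled_quantile_lower_general m n D hm a b xk xs q εl β hq hεl hβ B hB hb hqD Qc hQc Sl hSl
end

section
/- Fix x_k ∈ R^n with x_k ≠ x* and let e_k = x_k − x*. Suppose X_{k+1} = x_k − ⟨a_r, e_k⟩·a_r where r is drawn uniformly from a set of uncorrupted unit-norm rows. For κ ∈ (0,1), with probability at least 1 − κ (over the choice of r), |⟨a_r, e_k⟩| ≤ Q̃_{1−κ}(x_k), and on this event ‖X_{k+1} − x*‖² ≥ ‖e_k‖² − Q̃_{1−κ}(x_k)² ≥ (1 − Φ_{1−κ}²/n)·‖e_k‖², where Φ_{1−κ} = σ_max(A)·√n/(√m·√κ). -/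
open scoped RealInnerProductSpace Classical

/-! Projecting onto a unit row removes exactly the component `⟨a_r, e⟩ a_r`, so
`‖X_{k+1} - x*‖² = ‖e‖² - ⟨a_r, e⟩² ≥ ‖e‖² - Q²` whenever `|⟨a_r, e⟩| ≤ Q`. Since `Q` is the
`⌊(1-κ)m⌋`-th smallest residual, at least `κm` residuals are `≥ Q`, and Markov's inequality with
`∑ ⟨a_i, e⟩² ≤ σ_max² ‖e‖²` gives `κ m Q² ≤ σ_max² ‖e‖²`, i.e. `Q² ≤ Φ² ‖e‖² / n`. -/

open Finset

namespace List.Pairwise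

variable {α : Type*} [Preorder α] {l : List α}

theorem le_getElem_of_mem_take_s15 (hl : l.Pairwise (· ≤ ·)) {j : ℕ} (hj : j < l.length) {x : α}
    (hx : x ∈ l.take (j + 1)) : x ≤ l[j] := by
  obtain ⟨i, hi, rfl⟩ := List.mem_iff_getElem.1 hx
  rw [List.length_take] at hi
  rw [List.getElem_take]
  exact hl.rel_get_of_le (a := ⟨i, by omega⟩) (b := ⟨j, hj⟩) (Fin.mk_le_mk.2 (by omega))

theorem getElem_le_of_mem_drop_s15 (hl : l.Pairwise (· ≤ ·)) {j : ℕ} (hj : j < l.length) {x : α}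
    (hx : x ∈ l.drop j) : l[j] ≤ x := by
  obtain ⟨i, hi, rfl⟩ := List.mem_iff_getElem.1 hx
  rw [List.length_drop] at hi
  rw [List.getElem_drop]
  exact hl.rel_get_of_le (a := ⟨j, hj⟩) (b := ⟨j + i, by omega⟩) (Fin.mk_le_mk.2 (by omega))

variable [DecidableLE α]

theorem succ_le_countP_le_getElem_s15 (hl : l.Pairwise (· ≤ ·)) {j : ℕ} (hj : j < l.length) :
    j + 1 ≤ l.countP (· ≤ l[j]) :=
  calc j + 1 = (l.take (j + 1)).length := by rw [List.length_take]; omega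
    _ = (l.take (j + 1)).countP (· ≤ l[j]) :=
      (List.countP_eq_length.2 fun _ hx => decide_eq_true (hl.le_getElem_of_mem_take_s15 hj hx)).symm
    _ ≤ l.countP (· ≤ l[j]) := (List.take_sublist _ _).countP_le

theorem length_le_add_countP_getElem_le (hl : l.Pairwise (· ≤ ·)) {j : ℕ} (hj : j < l.length) :
    l.length ≤ j + l.countP fun x => l[j] ≤ x :=
  calc l.length = j + (l.drop j).length := by rw [List.length_drop]; omega
    _ = j + (l.drop j).countP (fun x => l[j] ≤ x) := by
      rw [List.countP_eq_length.2 fun _ hx => decide_eq_true (hl.getElem_le_of_mem_drop_s15 hj hx)]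
    _ ≤ j + l.countP (fun x => l[j] ≤ x) := Nat.add_le_add_left (List.drop_sublist _ _).countP_le _

end List.Pairwise

theorem Multiset.countP_sort {α : Type*} [LinearOrder α] (s : Multiset α) (p : α → Prop)
    [DecidablePred p] : (s.sort (· ≤ ·)).countP p = s.countP p := by
  rw [← Multiset.coe_countP, Multiset.sort_eq]

section Quantile

variable {s : Multiset ℝ} {q : ℝ}

theorem quantile_index_lt_length (hs : s ≠ 0) (hq : q ≤ 1) :
    max ⌊q * s.card⌋₊ 1 - 1 < (s.sort (· ≤ ·)).length := by
  have hfloor : ⌊q * s.card⌋₊ ≤ s.card :=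
    Nat.floor_le_of_le (mul_le_of_le_one_left (Nat.cast_nonneg _) hq)
  have hcard := Multiset.card_pos.2 hs
  rw [Multiset.length_sort]
  omega

theorem quantile_eq_getElem (hs : s ≠ 0) (hq : q ≤ 1) :
    quantile s q = (s.sort (· ≤ ·))[max ⌊q * s.card⌋₊ 1 - 1]'(quantile_index_lt_length hs hq) :=
  List.getD_eq_getElem _ _ _

theorem quantile_mem (hs : s ≠ 0) (hq : q ≤ 1) : quantile s q ∈ s := by
  rw [quantile_eq_getElem hs hq]
  exact (Multiset.mem_sort _).1 (List.getElem_mem _)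

theorem floor_le_countP_le_quantile (hs : s ≠ 0) (hq : q ≤ 1) :
    ⌊q * s.card⌋₊ ≤ s.countP (· ≤ quantile s q) := by
  have h := (Multiset.pairwise_sort s (· ≤ ·)).succ_le_countP_le_getElem_s15
    (quantile_index_lt_length hs hq)
  rw [Multiset.countP_sort, ← quantile_eq_getElem hs hq] at h
  omega

theorem card_le_floor_add_countP_quantile_le (hs : s ≠ 0) (hq : q ≤ 1) :
    s.card ≤ ⌊q * s.card⌋₊ + s.countP fun x => quantile s q ≤ x := by
  have h := (Multiset.pairwise_sort s (· ≤ ·)).length_le_add_countP_getElem_le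
    (quantile_index_lt_length hs hq)
  rw [Multiset.length_sort, Multiset.countP_sort, ← quantile_eq_getElem hs hq] at h
  refine h.trans (Nat.add_le_add_right ?_ _)
  omega

end Quantile

theorem Finset.card_filter_univ_eq_countP_map {ι β : Type*} [Fintype ι] (f : ι → β)
    (p : β → Prop) [DecidablePred p] : #{i | p (f i)} = (univ.val.map f).countP p := by
  rw [Multiset.countP_map]
  rfl

theorem card_filter_le_abs_mul_sq_le_sum_sq {ι : Type*} (s : Finset ι) (f : ι → ℝ) {c : ℝ}
    (hc : 0 ≤ c) : #{i ∈ s | c ≤ |f i|} * c ^ 2 ≤ ∑ i ∈ s, f i ^ 2 :=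
  calc #{i ∈ s | c ≤ |f i|} * c ^ 2 ≤ ∑ i ∈ s with c ≤ |f i|, f i ^ 2 := by
        rw [← nsmul_eq_mul]
        refine card_nsmul_le_sum _ _ _ fun i hi => ?_
        simpa only [sq_abs] using pow_le_pow_left₀ hc (mem_filter.1 hi).2 2
    _ ≤ ∑ i ∈ s, f i ^ 2 := sum_le_sum_of_subset_of_nonneg (filter_subset _ _)
        fun i _ _ => sq_nonneg _

section FintypeQuantile

variable {ι : Type*} [Fintype ι] [Nonempty ι] {q : ℝ}

theorem map_univ_val_ne_zero {β : Type*} (f : ι → β) : univ.val.map f ≠ 0 := by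
  simp [univ_nonempty.ne_empty]

theorem floor_le_card_filter_le_quantile (f : ι → ℝ) (hq : q ≤ 1) :
    ⌊q * Fintype.card ι⌋₊ ≤ #{i | f i ≤ quantile (univ.val.map f) q} := by
  rw [card_filter_univ_eq_countP_map f (· ≤ quantile (univ.val.map f) q)]
  simpa using floor_le_countP_le_quantile (map_univ_val_ne_zero f) hq

theorem card_sub_floor_mul_sq_quantile_abs_le_sum_sq (f : ι → ℝ) (hq : q ≤ 1) :
    ((Fintype.card ι : ℝ) - ⌊q * Fintype.card ι⌋₊) * quantile (univ.val.map fun i => |f i|) q ^ 2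
      ≤ ∑ i, f i ^ 2 := by
  set Q := quantile (univ.val.map fun i => |f i|) q
  have hs := map_univ_val_ne_zero fun i => |f i|
  have hQ : 0 ≤ Q := by
    obtain ⟨i, -, hi⟩ := Multiset.mem_map.1 (quantile_mem hs hq)
    exact (abs_nonneg _).trans_eq hi
  have habove := card_le_floor_add_countP_quantile_le hs hq
  rw [← card_filter_univ_eq_countP_map (fun i => |f i|)] at habove
  simp only [Multiset.card_map, card_val, card_univ] at habove
  have habove' : (Fintype.card ι : ℝ) - ⌊q * Fintype.card ι⌋₊ ≤ #{i | Q ≤ |f i|} := by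
    rw [sub_le_iff_le_add']
    exact_mod_cast habove
  calc _ ≤ #{i | Q ≤ |f i|} * Q ^ 2 := by gcongr
    _ ≤ ∑ i, f i ^ 2 := card_filter_le_abs_mul_sq_le_sum_sq _ _ hQ

end FintypeQuantile

theorem norm_sub_inner_smul_sq {E : Type*} [NormedAddCommGroup E] [InnerProductSpace ℝ E]
    {a : E} (ha : ‖a‖ = 1) (e : E) : ‖e - ⟪a, e⟫ • a‖ ^ 2 = ‖e‖ ^ 2 - ⟪a, e⟫ ^ 2 := by
  rw [norm_sub_sq_real, real_inner_smul_right, real_inner_comm, norm_smul, ha, mul_one,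
    Real.norm_eq_abs, sq_abs]
  ring

theorem uncorrupted_step_lower_bound_general (m n : ℕ) (hm : 0 < m) (hn : 0 < n)
    (a : Fin m → EuclideanSpace ℝ (Fin n)) (ha : ∀ i, ‖a i‖ = 1)
    (smax : ℝ)
    (hsig : ∀ y : EuclideanSpace ℝ (Fin n),
      Real.sqrt (∑ i, ⟪a i, y⟫ ^ 2) ≤ smax * ‖y‖)
    (xk xs : EuclideanSpace ℝ (Fin n))
    (κ : ℝ) (hκ : κ ∈ Set.Ioo (0:ℝ) 1)
    (hint : ∃ k : ℕ, (k : ℝ) = (1 - κ) * m) :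
    ((1 - κ) * m ≤
        ((Finset.univ.filter fun r : Fin m =>
          |⟪a r, xk - xs⟫| ≤
            quantile (Multiset.map (fun i => |⟪a i, xk - xs⟫|) Finset.univ.val)
              (1 - κ)).card : ℝ)) ∧
      ∀ r : Fin m,
        |⟪a r, xk - xs⟫| ≤
            quantile (Multiset.map (fun i => |⟪a i, xk - xs⟫|) Finset.univ.val) (1 - κ) →
        ‖xk - xs‖ ^ 2 -
            (quantile (Multiset.map (fun i => |⟪a i, xk - xs⟫|) Finset.univ.val) (1 - κ)) ^ 2 ≤
          ‖(xk - ⟪a r, xk - xs⟫ • a r) - xs‖ ^ 2 ∧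
        (1 - (smax * Real.sqrt n / (Real.sqrt m * Real.sqrt κ)) ^ 2 / n) * ‖xk - xs‖ ^ 2 ≤
          ‖xk - xs‖ ^ 2 -
            (quantile (Multiset.map (fun i => |⟪a i, xk - xs⟫|) Finset.univ.val) (1 - κ)) ^ 2 := by
  obtain ⟨hκ0, -⟩ := hκ
  obtain ⟨k, hk⟩ := hint
  have : Nonempty (Fin m) := ⟨⟨0, hm⟩⟩
  set e := xk - xs
  set Q := quantile (univ.val.map fun i => |⟪a i, e⟫|) (1 - κ)
  have hq : 1 - κ ≤ 1 := by linarith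
  have hfloor : ⌊(1 - κ) * Fintype.card (Fin m)⌋₊ = k := by
    rw [Fintype.card_fin, ← hk, Nat.floor_natCast]
  have hQsq : κ * m * Q ^ 2 ≤ smax ^ 2 * ‖e‖ ^ 2 :=
    calc κ * m * Q ^ 2
        = ((Fintype.card (Fin m) : ℝ) - ⌊(1 - κ) * Fintype.card (Fin m)⌋₊) * Q ^ 2 := by
          rw [hfloor, hk, Fintype.card_fin]; ring
      _ ≤ ∑ i, ⟪a i, e⟫ ^ 2 := card_sub_floor_mul_sq_quantile_abs_le_sum_sq _ hq
      _ ≤ smax ^ 2 * ‖e‖ ^ 2 := by simpa only [mul_pow] using (Real.sqrt_le_iff.1 (hsig e)).2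
  have hΦ : (smax * √n / (√m * √κ)) ^ 2 / n = smax ^ 2 / (m * κ) := by
    rw [div_pow, mul_pow, mul_pow, Real.sq_sqrt n.cast_nonneg, Real.sq_sqrt m.cast_nonneg,
      Real.sq_sqrt hκ0.le]
    field_simp
  refine ⟨hk ▸ by exact_mod_cast hfloor ▸ floor_le_card_filter_le_quantile _ hq,
    fun r hr => ⟨?_, ?_⟩⟩
  · rw [sub_right_comm, norm_sub_inner_smul_sq (ha r)]
    linarith [sq_le_sq' (abs_le.1 hr).1 (abs_le.1 hr).2]
  · have hmκ : (0 : ℝ) < m * κ := by positivity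
    rw [hΦ, sub_mul, one_mul, div_mul_eq_mul_div, sub_le_sub_iff_left, le_div_iff₀ hmκ]
    linarith

/-- Performance limit of one uncorrupted Kaczmarz step.  With `e_k = x_k - x*` and
`Q̃ = Q̃_{1-κ}(x_k)` the `(1-κ)`-quantile of the ideal residuals, a uniformly chosen row
`r` satisfies `|⟨a_r, e_k⟩| ≤ Q̃` with probability at least `1 - κ` (at least `(1-κ)m`
rows qualify), and for every such row the projected iterate `x_k - ⟨a_r, e_k⟩ • a_r`
satisfies `‖X_{k+1} - x*‖² ≥ ‖e_k‖² - Q̃² ≥ (1 - Φ²/n) ‖e_k‖²`, where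
`Φ = σ_max √n / (√m √κ)`.  ((1-κ)m is assumed integral, per the paper's convention.) -/
theorem uncorrupted_step_lower_bound (m n : ℕ) (hm : 0 < m) (hn : 0 < n)
    (a : Fin m → EuclideanSpace ℝ (Fin n)) (ha : ∀ i, ‖a i‖ = 1)
    (smax : ℝ) (hs0 : 0 ≤ smax)
    (hsig : ∀ y : EuclideanSpace ℝ (Fin n),
      Real.sqrt (∑ i, ⟪a i, y⟫ ^ 2) ≤ smax * ‖y‖)
    (xk xs : EuclideanSpace ℝ (Fin n)) (hne : xk ≠ xs)
    (κ : ℝ) (hκ : κ ∈ Set.Ioo (0:ℝ) 1)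
    (hint : ∃ k : ℕ, (k : ℝ) = (1 - κ) * m) :
    ((1 - κ) * m ≤
        ((Finset.univ.filter fun r : Fin m =>
          |⟪a r, xk - xs⟫| ≤
            quantile (Multiset.map (fun i => |⟪a i, xk - xs⟫|) Finset.univ.val)
              (1 - κ)).card : ℝ)) ∧
      ∀ r : Fin m,
        |⟪a r, xk - xs⟫| ≤
            quantile (Multiset.map (fun i => |⟪a i, xk - xs⟫|) Finset.univ.val) (1 - κ) →
        ‖xk - xs‖ ^ 2 -
            (quantile (Multiset.map (fun i => |⟪a i, xk - xs⟫|) Finset.univ.val) (1 - κ)) ^ 2 ≤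
          ‖(xk - ⟪a r, xk - xs⟫ • a r) - xs‖ ^ 2 ∧
        (1 - (smax * Real.sqrt n / (Real.sqrt m * Real.sqrt κ)) ^ 2 / n) * ‖xk - xs‖ ^ 2 ≤
          ‖xk - xs‖ ^ 2 -
            (quantile (Multiset.map (fun i => |⟪a i, xk - xs⟫|) Finset.univ.val) (1 - κ)) ^ 2 :=
  uncorrupted_step_lower_bound_general m n hm hn a ha smax hsig xk xs κ hκ hint
end
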